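/- arXiv:1802.08374 — 4 statements merged into one kernel-verified Lean document; each statement's English description precedes it below -/
import Mathlib

section
/- Let m ≥ 6 and ℓ be integers with 1 ≤ ℓ ≤ m − 4. Then the sum of generalized m-gonal numbers f(x₁,…,x_{ℓ−1}, y₁,…,y_m, z) = ∑_{j=1}^{ℓ−1} P_m(x_j) + (ℓ+1)·∑_{j=1}^{m} P_m(y_j) + (2ℓ+1)·P_m(z) represents every nonnegative integer except ℓ; that is, for every nonnegative integer k ≠ ℓ there exist integers x_j, y_j, z with f = k, and there is no integer choice of the variables with f = ℓ. -/
/-- The generalized `m`-gonal number `P_m(x) = ((m-2)x² - (m-4)x)/2`. -/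
def polygonal (m x : ℤ) : ℤ := ((m - 2) * x ^ 2 - (m - 4) * x) / 2

/-!
Since `P_m(x) = (m-2)·x(x-1)/2 + x`, three values whose arguments add up to `3s` give
`P_m(a+s) + P_m(b+s) + P_m(s-a-b) = (m-2)(a² + ab + b²) + 3 P_m(s)`.
The quaternary form `a² + ab + b² + c² + cd + d²` is the norm form of a quaternion order, hence
multiplicative, and Lagrange's descent shows that it represents every prime and so every `K ≥ 0`.
Six of `m` variables thus give `(m-2)K + 3P_m(s₁) + 3P_m(s₂)`; with `s₁, s₂ ∈ {-1, 0, 1}` and the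
remaining `m - 6` variables in `{0, 1}` every residue mod `m - 2` is reached, so every `n ≥ 0` is a
sum of `m` generalized `m`-gonal numbers. Writing `k = (ℓ+1)q + r`, the `x`'s give `r < ℓ` and
`z = 1` handles `r = ℓ`. Conversely, values of `P_m` below `m - 3` are `0` or `1`, so the `ℓ - 1`
`x`'s stay below `ℓ`, while any nonzero `y`- or `z`-term already exceeds `ℓ`.
-/

def eisensteinForm (a b : ℤ) : ℤ := a ^ 2 + a * b + b ^ 2

lemma eisensteinForm_nonneg (a b : ℤ) : 0 ≤ eisensteinForm a b := by
  unfold eisensteinForm; nlinarith [sq_nonneg (2 * a + b), sq_nonneg b]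

lemma eisensteinForm_eq_zero {a b : ℤ} (h : eisensteinForm a b = 0) : a = 0 ∧ b = 0 := by
  unfold eisensteinForm at h
  constructor <;> nlinarith [sq_nonneg (2 * a + b), sq_nonneg (a + 2 * b)]

local notation "ℍ₃" => QuaternionAlgebra ℤ (-1) 1 (-1)

open QuaternionAlgebra

def quatNorm (x : ℍ₃) : ℤ := eisensteinForm x.re x.imI + eisensteinForm x.imJ x.imK

section

variable (x y : ℍ₃)

lemma mul_star_eq_quatNorm : x * star x = quatNorm x := by
  ext <;>
    simp only [re_mul, imI_mul, imJ_mul, imK_mul, re_star, imI_star, imJ_star, imK_star,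
      re_intCast, imI_intCast, imJ_intCast, imK_intCast, Int.cast_id, quatNorm, eisensteinForm] <;>
    ring

lemma quatNorm_mul : quatNorm (x * y) = quatNorm x * quatNorm y := by
  simp only [quatNorm, eisensteinForm, re_mul, imI_mul, imJ_mul, imK_mul]; ring

lemma quatNorm_star : quatNorm (star x) = quatNorm x := by
  simp only [quatNorm, eisensteinForm, re_star, imI_star, imJ_star, imK_star]; ring

lemma quatNorm_smul (n : ℤ) : quatNorm (n • x) = n ^ 2 * quatNorm x := by
  simp only [quatNorm, eisensteinForm, re_smul, imI_smul, imJ_smul, imK_smul, smul_eq_mul]; ring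

lemma quatNorm_sub_smul (n : ℤ) :
    quatNorm (x - n • y) = quatNorm x - n * (x * star y + y * star x).re + n ^ 2 * quatNorm y := by
  simp only [quatNorm, eisensteinForm, re_sub, imI_sub, imJ_sub, imK_sub, re_smul, imI_smul,
    imJ_smul, imK_smul, smul_eq_mul, re_add, re_mul, re_star, imI_star, imJ_star, imK_star]
  ring

end

lemma quatNorm_nonneg (x : ℍ₃) : 0 ≤ quatNorm x :=
  add_nonneg (eisensteinForm_nonneg _ _) (eisensteinForm_nonneg _ _)

lemma eq_zero_of_quatNorm_eq_zero {x : ℍ₃} (h : quatNorm x = 0) : x = 0 := by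
  have h₁ := eisensteinForm_nonneg x.re x.imI
  have h₂ := eisensteinForm_nonneg x.imJ x.imK
  unfold quatNorm at h
  obtain ⟨h_re, h_imI⟩ := eisensteinForm_eq_zero (by omega : eisensteinForm x.re x.imI = 0)
  obtain ⟨h_imJ, h_imK⟩ := eisensteinForm_eq_zero (by omega : eisensteinForm x.imJ x.imK = 0)
  ext <;> assumption

lemma exists_abs_two_mul_sub_add_le (u w : ℤ) {n : ℤ} (hn : 0 < n) :
    ∃ a, |2 * (u - n * a) + w| ≤ n := by
  refine ⟨(2 * u + w + n) / (2 * n), abs_le.2 ⟨?_, ?_⟩⟩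
  · have := Int.ediv_mul_le (2 * u + w + n) (by positivity : 2 * n ≠ 0)
    linarith
  · have := Int.lt_ediv_add_one_mul_self (2 * u + w + n) (by positivity : 0 < 2 * n)
    linarith

-- `4 (a² + ab + b²) = (2a + b)² + 3b²`: round `b` first, then `2a + b`.
lemma exists_eisensteinForm_sub_le (u v : ℤ) {n : ℤ} (hn : 0 < n) :
    ∃ a b, 16 * eisensteinForm (u - n * a) (v - n * b) ≤ 7 * n ^ 2 := by
  obtain ⟨b, hb⟩ := exists_abs_two_mul_sub_add_le v 0 hn
  obtain ⟨a, ha⟩ := exists_abs_two_mul_sub_add_le u (v - n * b) hn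
  refine ⟨a, b, ?_⟩
  rw [add_zero] at hb
  have h₁ := sq_le_sq' (abs_le.1 ha).1 (abs_le.1 ha).2
  have h₂ := sq_le_sq' (abs_le.1 hb).1 (abs_le.1 hb).2
  unfold eisensteinForm
  nlinarith

lemma exists_quatNorm_sub_smul_lt (x : ℍ₃) {n : ℤ} (hn : 0 < n) :
    ∃ c : ℍ₃, quatNorm (x - n • c) < n ^ 2 := by
  obtain ⟨a, b, hab⟩ := exists_eisensteinForm_sub_le x.re x.imI hn
  obtain ⟨c, d, hcd⟩ := exists_eisensteinForm_sub_le x.imJ x.imK hn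
  refine ⟨⟨a, b, c, d⟩, ?_⟩
  simp only [quatNorm, re_sub, imI_sub, imJ_sub, imK_sub, re_smul, imI_smul, imJ_smul, imK_smul,
    smul_eq_mul]
  nlinarith

lemma exists_quatNorm_eq_mul_of_lt {p M : ℕ} (hp : p.Prime) (hM : 1 < M) (hMp : M < p) {x : ℍ₃}
    (hx : quatNorm x = M * p) : ∃ r : ℕ, 0 < r ∧ r < M ∧ ∃ y : ℍ₃, quatNorm y = r * p := by
  have hM0 : (0 : ℤ) < M := by exact_mod_cast (by omega : 0 < M)
  obtain ⟨c, hc⟩ := exists_quatNorm_sub_smul_lt x hM0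
  set δ := x - (M : ℤ) • c with hδ
  obtain ⟨r, hr⟩ : (M : ℤ) ∣ quatNorm δ :=
    ⟨p - (x * star c + c * star x).re + M * quatNorm c, by rw [quatNorm_sub_smul, hx]; ring⟩
  have hr0 : 0 ≤ r := by nlinarith [quatNorm_nonneg δ]
  have hrM : r < M := by nlinarith
  have hr_ne : r ≠ 0 := by
    rintro rfl
    have hxc : x = (M : ℤ) • c :=
      sub_eq_zero.1 (eq_zero_of_quatNorm_eq_zero (hr.trans (mul_zero _)))
    have hpM : (p : ℤ) = M * quatNorm c :=
      mul_left_cancel₀ hM0.ne' (by rw [← hx, hxc, quatNorm_smul]; ring)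
    have hdvd : M ∣ p := by exact_mod_cast Dvd.intro _ hpM.symm
    rcases hp.eq_one_or_self_of_dvd M hdvd with h | h <;> omega
  refine ⟨r.toNat, by omega, by omega, (p : ℤ) - x * star c, ?_⟩
  -- `x * star δ ≡ x * star x = M * p ≡ 0 [mod M]`, and dividing it by `M` leaves norm `r * p`.
  have key : x * star δ = (M : ℤ) • ((p : ℤ) - x * star c) := by
    rw [hδ, star_sub, star_zsmul, mul_sub, mul_star_eq_quatNorm, hx, mul_smul_comm, smul_sub,
      Int.cast_mul, ← zsmul_eq_mul]
  have := congrArg quatNorm key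
  rw [quatNorm_mul, quatNorm_star, hx, hr, quatNorm_smul] at this
  rw [Int.toNat_of_nonneg hr0]
  exact mul_left_cancel₀ (pow_ne_zero 2 hM0.ne') (by linear_combination -this)

lemma exists_quatNorm_eq_prime_of_mul {p : ℕ} (hp : p.Prime) (M : ℕ) (hM : 0 < M) (hMp : M < p)
    (h : ∃ x : ℍ₃, quatNorm x = M * p) : ∃ x : ℍ₃, quatNorm x = p := by
  induction M using Nat.strong_induction_on with
  | _ M ih =>
    obtain ⟨x, hx⟩ := h
    rcases (by omega : M = 1 ∨ 1 < M) with rfl | hM1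
    · exact ⟨x, by simpa using hx⟩
    obtain ⟨r, hr0, hrM, hr⟩ := exists_quatNorm_eq_mul_of_lt hp hM1 hMp hx
    exact ih r hrM hr0 (hrM.trans hMp) hr

open Polynomial in
lemma FiniteField.exists_sq_add_mul_add_sq_eq_neg_one {F : Type*} [Field F] [Fintype F]
    (hF : ringChar F ≠ 2) (h3 : (3 : F) ≠ 0) : ∃ a b : F, a ^ 2 + a * b + b ^ 2 = -1 := by
  have h2 : (2 : F) ≠ 0 := Ring.two_ne_zero hF
  have hg : degree (C 3 * X ^ 2 + C 4 : F[X]) = 2 := by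
    rw [degree_add_eq_left_of_degree_lt] <;> rw [degree_C_mul_X_pow 2 h3]
    · rfl
    · exact degree_C_le.trans_lt (by norm_num)
  obtain ⟨u, v, huv⟩ := FiniteField.exists_root_sum_quadratic (degree_X_pow (R := F) 2) hg
    (FiniteField.odd_card_of_char_ne_two hF)
  refine ⟨(u - v) / 2, v, ?_⟩
  simp only [eval_pow, eval_X, eval_add, eval_mul, eval_C] at huv
  field_simp
  linear_combination huv

lemma exists_imJ_eq_one_dvd_quatNorm {p : ℕ} [Fact p.Prime] (hp2 : p ≠ 2) (hp3 : p ≠ 3) :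
    ∃ x : ℍ₃, x.imJ = 1 ∧ (p : ℤ) ∣ quatNorm x := by
  have h3 : (3 : ZMod p) ≠ 0 := by
    rw [show (3 : ZMod p) = (3 : ℕ) by norm_num, Ne, ZMod.natCast_eq_zero_iff,
      Nat.prime_dvd_prime_iff_eq Fact.out Nat.prime_three]
    exact hp3
  obtain ⟨a, b, hab⟩ := FiniteField.exists_sq_add_mul_add_sq_eq_neg_one
    (by rwa [ZMod.ringChar_zmod_n]) h3
  refine ⟨⟨a.val, b.val, 1, 0⟩, rfl, ?_⟩
  rw [← ZMod.intCast_zmod_eq_zero_iff_dvd]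
  push_cast [quatNorm, eisensteinForm, ZMod.natCast_val, ZMod.cast_id]
  linear_combination hab

lemma exists_quatNorm_eq_prime {p : ℕ} (hp : p.Prime) : ∃ x : ℍ₃, quatNorm x = p := by
  have : Fact p.Prime := ⟨hp⟩
  rcases eq_or_ne p 2 with rfl | hp2
  · exact ⟨⟨1, 0, 1, 0⟩, by simp [quatNorm, eisensteinForm]⟩
  rcases eq_or_ne p 3 with rfl | hp3
  · exact ⟨⟨1, 1, 0, 0⟩, by simp [quatNorm, eisensteinForm]⟩
  obtain ⟨x, hx₁, hpx⟩ := exists_imJ_eq_one_dvd_quatNorm hp2 hp3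
  have hp0 : (0 : ℤ) < p := by exact_mod_cast hp.pos
  obtain ⟨c, hc⟩ := exists_quatNorm_sub_smul_lt x hp0
  set δ := x - (p : ℤ) • c with hδ
  obtain ⟨M, hM⟩ : (p : ℤ) ∣ quatNorm δ := by
    rw [hδ, quatNorm_sub_smul]
    exact (hpx.sub (dvd_mul_right _ _)).add ⟨p * quatNorm c, by ring⟩
  have hδ₀ : δ ≠ 0 := fun h => by
    have := congrArg imJ h
    simp only [hδ, imJ_sub, imJ_smul, smul_eq_mul, hx₁, imJ_zero] at this
    exact hp.one_lt.ne' (by exact_mod_cast Int.eq_one_of_mul_eq_one_right hp0.le (by linarith))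
  have hM0 : 0 < M := by
    have hpos := (quatNorm_nonneg δ).lt_of_ne' (mt eq_zero_of_quatNorm_eq_zero hδ₀)
    rw [hM] at hpos
    exact pos_of_mul_pos_right hpos hp0.le
  have hMp : M < p := by nlinarith
  refine exists_quatNorm_eq_prime_of_mul hp M.toNat (by omega) (by omega) ⟨δ, ?_⟩
  rw [hM, Int.toNat_of_nonneg hM0.le]; ring

lemma exists_quatNorm_eq (n : ℕ) : ∃ x : ℍ₃, quatNorm x = n := by
  induction n using induction_on_primes with
  | zero => exact ⟨0, by simp [quatNorm, eisensteinForm]⟩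
  | one => exact ⟨1, by simp [quatNorm, eisensteinForm]⟩
  | prime_mul p n hp ih =>
    obtain ⟨x, hx⟩ := exists_quatNorm_eq_prime hp
    obtain ⟨y, hy⟩ := ih
    exact ⟨x * y, by rw [quatNorm_mul, hx, hy]; push_cast; ring⟩

lemma two_mul_polygonal (m x : ℤ) : 2 * polygonal m x = (m - 2) * x ^ 2 - (m - 4) * x := by
  refine Int.mul_ediv_cancel' ?_
  obtain ⟨k, hk⟩ := Int.even_mul_pred_self x
  exact ⟨(m - 2) * k + x, by linear_combination (m - 2) * hk⟩

lemma polygonal_zero (m : ℤ) : polygonal m 0 = 0 := by simp [polygonal]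

lemma polygonal_one (m : ℤ) : polygonal m 1 = 1 := by
  have := two_mul_polygonal m 1; linarith

lemma polygonal_neg_one (m : ℤ) : polygonal m (-1) = m - 3 := by
  have := two_mul_polygonal m (-1); linarith

lemma polygonal_nonneg {m : ℤ} (hm : 4 ≤ m) (x : ℤ) : 0 ≤ polygonal m x := by
  have h := two_mul_polygonal m x
  have : 0 ≤ x * (x - 1) := by rcases le_or_gt x 0 with hx | hx <;> nlinarith
  nlinarith

lemma polygonal_le_one_or_sub_three_le {m : ℤ} (hm : 4 ≤ m) (x : ℤ) :
    polygonal m x ≤ 1 ∨ m - 3 ≤ polygonal m x := by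
  have h := two_mul_polygonal m x
  rcases lt_trichotomy x 0 with hx | rfl | hx
  · right
    have hx : x ≤ -1 := by omega
    nlinarith [mul_nonneg (by omega : 0 ≤ m - 4) (by omega : 0 ≤ -1 - x),
      mul_nonneg (by omega : 0 ≤ m - 2) (by nlinarith : 0 ≤ x ^ 2 - 1)]
  · left; rw [polygonal_zero]; norm_num
  rcases eq_or_lt_of_le (Int.add_one_le_of_lt hx) with rfl | hx
  · left; rw [zero_add, polygonal_one]
  · right
    nlinarith [mul_nonneg (by omega : 0 ≤ m - 4) (by nlinarith : 0 ≤ x * (x - 1) - 2)]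

lemma polygonal_add_polygonal_add_polygonal (m a b s : ℤ) :
    polygonal m (a + s) + polygonal m (b + s) + polygonal m (s - a - b)
      = (m - 2) * eisensteinForm a b + 3 * polygonal m s := by
  have h := two_mul_polygonal m
  apply mul_left_cancel₀ (two_ne_zero' ℤ)
  unfold eisensteinForm
  linear_combination h (a + s) + h (b + s) + h (s - a - b) - 3 * h s

def IsSumPolygonal (m : ℤ) (n : ℕ) (S : ℤ) : Prop :=
  ∃ y : Fin n → ℤ, ∑ j, polygonal m (y j) = S

section IsSumPolygonal

variable {m : ℤ}

lemma IsSumPolygonal.add {n₁ n₂ : ℕ} {S₁ S₂ : ℤ} (h₁ : IsSumPolygonal m n₁ S₁)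
    (h₂ : IsSumPolygonal m n₂ S₂) : IsSumPolygonal m (n₁ + n₂) (S₁ + S₂) := by
  obtain ⟨y₁, rfl⟩ := h₁
  obtain ⟨y₂, rfl⟩ := h₂
  exact ⟨Fin.append y₁ y₂, by simp [Fin.sum_univ_add]⟩

lemma isSumPolygonal_one (x : ℤ) : IsSumPolygonal m 1 (polygonal m x) :=
  ⟨![x], by simp⟩

lemma isSumPolygonal_of_nonneg_of_le {n : ℕ} {t : ℤ} (ht₀ : 0 ≤ t) (ht : t ≤ n) :
    IsSumPolygonal m n t := by
  induction n generalizing t with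
  | zero => exact ⟨![], by simp; omega⟩
  | succ n ih =>
    rcases eq_or_lt_of_le ht₀ with rfl | ht₀
    · simpa [polygonal_zero] using (ih le_rfl (by simp)).add (isSumPolygonal_one 0)
    · simpa [polygonal_one] using
        (ih (t := t - 1) (by omega) (by push_cast at ht; omega)).add (isSumPolygonal_one 1)

lemma isSumPolygonal_three (a b s : ℤ) :
    IsSumPolygonal m 3 ((m - 2) * eisensteinForm a b + 3 * polygonal m s) :=
  ⟨![a + s, b + s, s - a - b], by simp [Fin.sum_univ_three, polygonal_add_polygonal_add_polygonal]⟩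

lemma isSumPolygonal_six {K : ℤ} (hK : 0 ≤ K) (s₁ s₂ : ℤ) :
    IsSumPolygonal m 6 ((m - 2) * K + 3 * polygonal m s₁ + 3 * polygonal m s₂) := by
  obtain ⟨x, hx⟩ := exists_quatNorm_eq K.toNat
  rw [Int.toNat_of_nonneg hK, quatNorm] at hx
  convert (isSumPolygonal_three x.re x.imI s₁).add (isSumPolygonal_three x.imJ x.imK s₂) using 1
  rw [← hx]; ring

lemma IsSumPolygonal.le_card (hm : 4 ≤ m) {n : ℕ} {S : ℤ} (h : IsSumPolygonal m n S)
    (hS : S < m - 3) : S ≤ n := by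
  obtain ⟨y, rfl⟩ := h
  calc ∑ j, polygonal m (y j) ≤ ∑ _j : Fin n, (1 : ℤ) := Finset.sum_le_sum fun j _ => by
        have := Finset.single_le_sum (fun i _ => polygonal_nonneg hm (y i)) (Finset.mem_univ j)
        exact (polygonal_le_one_or_sub_three_le hm (y j)).resolve_right (by omega)
    _ = n := by simp

end IsSumPolygonal

lemma isSumPolygonal_self_of_le_sub_six {m : ℕ} (hm : 6 ≤ m) {K T : ℤ} (hK : 0 ≤ K) (hT₀ : 0 ≤ T)
    (hT : T ≤ m - 6) (s₁ s₂ : ℤ) :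
    IsSumPolygonal m m ((m - 2) * K + 3 * polygonal m s₁ + 3 * polygonal m s₂ + T) := by
  have h := (isSumPolygonal_six (m := m) hK s₁ s₂).add
    (isSumPolygonal_of_nonneg_of_le (n := m - 6) hT₀ (by omega))
  rwa [Nat.add_sub_cancel' hm] at h

lemma exists_eq_mul_add {d : ℤ} (hd : 0 < d) (S : ℤ) :
    ∃ q r, S = d * q + r ∧ 0 ≤ r ∧ r < d :=
  ⟨S / d, S % d, (Int.mul_ediv_add_emod S d).symm, Int.emod_nonneg S hd.ne',
    Int.emod_lt_of_pos S hd⟩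

theorem isSumPolygonal_self_of_nonneg {m : ℕ} (hm : 6 ≤ m) {S : ℤ} (hS : 0 ≤ S) :
    IsSumPolygonal m m S := by
  rcases le_or_gt S m with hSm | hmS
  · exact isSumPolygonal_of_nonneg_of_le hS hSm
  obtain ⟨q, r, rfl, hr₀, hr⟩ := exists_eq_mul_add (by omega : (0 : ℤ) < m - 2) S
  have hq : 1 ≤ q := by nlinarith
  rcases le_or_gt r (m - 6) with h₁ | h₁
  · simpa [polygonal_zero] using isSumPolygonal_self_of_le_sub_six hm (by omega) hr₀ h₁ 0 0
  rcases le_or_gt 3 r with h₂ | h₂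
  · convert isSumPolygonal_self_of_le_sub_six hm (K := q) (T := r - 3) (by omega) (by omega)
      (by omega) 1 0 using 1
    simp only [polygonal_one, polygonal_zero]; ring
  rcases le_or_gt r (2 * m - 11) with h₃ | h₃
  · have hq₂ : 2 ≤ q := by nlinarith
    convert isSumPolygonal_self_of_le_sub_six hm (K := q - 2) (T := r + 5 - m) (by omega)
      (by omega) (by omega) (-1) 0 using 1
    simp only [polygonal_neg_one, polygonal_zero]; ring
  -- only `m = 6`, `r = 2` is left
  · convert isSumPolygonal_self_of_le_sub_six hm (K := q - 1) (T := m + r - 8) (by omega)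
      (by omega) (by omega) 1 1 using 1
    simp only [polygonal_one]; ring

/-- Theorem 1 (2), explicit construction: for 1 ≤ ℓ ≤ m - 4, the sum
`∑_{j=1}^{ℓ-1} P_m(x_j) + (ℓ+1)·∑_{j=1}^{m} P_m(y_j) + (2ℓ+1)·P_m(z)` represents every
nonnegative integer except ℓ. -/
theorem represents_all_except_ell (m ℓ : ℕ) (hm : 6 ≤ m) (hℓ : 1 ≤ ℓ)
    (hℓm : (ℓ : ℤ) ≤ (m : ℤ) - 4) :
    (∀ k : ℤ, 0 ≤ k → k ≠ (ℓ : ℤ) →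
      ∃ (x : Fin (ℓ - 1) → ℤ) (y : Fin m → ℤ) (z : ℤ),
        (∑ j, polygonal m (x j)) + ((ℓ : ℤ) + 1) * (∑ j, polygonal m (y j))
          + (2 * (ℓ : ℤ) + 1) * polygonal m z = k) ∧
    ¬ ∃ (x : Fin (ℓ - 1) → ℤ) (y : Fin m → ℤ) (z : ℤ),
        (∑ j, polygonal m (x j)) + ((ℓ : ℤ) + 1) * (∑ j, polygonal m (y j))
          + (2 * (ℓ : ℤ) + 1) * polygonal m z = (ℓ : ℤ) := by
  have hm₄ : (4 : ℤ) ≤ m := by omega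
  constructor
  · intro k hk hkℓ
    obtain ⟨q, r, rfl, hr₀, hr⟩ := exists_eq_mul_add (by omega : (0 : ℤ) < ℓ + 1) k
    have hq : 0 ≤ q := by nlinarith
    rcases (by omega : r ≤ ℓ - 1 ∨ r = ℓ) with hrℓ | rfl
    · obtain ⟨x, hx⟩ := isSumPolygonal_of_nonneg_of_le (m := m) (n := ℓ - 1) hr₀ (by omega)
      obtain ⟨y, hy⟩ := isSumPolygonal_self_of_nonneg hm hq
      exact ⟨x, y, 0, by rw [hx, hy, polygonal_zero]; ring⟩
    · have hq₁ : 1 ≤ q := by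
        by_contra! hq₁
        exact hkℓ (by rw [show q = 0 by omega]; ring)
      obtain ⟨y, hy⟩ := isSumPolygonal_self_of_nonneg hm (S := q - 1) (by omega)
      exact ⟨0, y, 1, by simp only [Pi.zero_apply, polygonal_zero, polygonal_one, hy,
        Finset.sum_const_zero]; ring⟩
  · rintro ⟨x, y, z, h⟩
    have hX₀ := Finset.sum_nonneg fun j (_ : j ∈ Finset.univ) => polygonal_nonneg hm₄ (x j)
    have hY := Finset.sum_nonneg fun j (_ : j ∈ Finset.univ) => polygonal_nonneg hm₄ (y j)
    have hZ := polygonal_nonneg hm₄ z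
    have hX : ∑ j, polygonal m (x j) ≤ ℓ - 1 := by
      have := IsSumPolygonal.le_card hm₄ ⟨x, rfl⟩ (by nlinarith)
      omega
    rcases eq_or_lt_of_le hY with hY | hY <;> rcases eq_or_lt_of_le hZ with hZ | hZ <;> nlinarith
end

section
/- Let χ be a Dirichlet character modulo N taking only real values. Then for every integer s ≥ 2, the value L(s,χ) of the Dirichlet L-function is a real number satisfying ζ(s)^{-1} ≤ L(s,χ) ≤ ζ(s), where ζ denotes the Riemann zeta function. -/
/-!
Through the Euler product, `L(s, χ) = exp (∑ₚ -log (1 - χ(p) p^{-s}))` and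
`ζ(s) = exp (∑ₚ -log (1 - p^{-s}))`. For a real character every Euler factor is real, and for
`c ∈ [-1, 1]`, `x ∈ [0, 1)` one has `1 - x ≤ 1 - c x ≤ (1 - x)⁻¹`, so each logarithm in the
first sum is bounded in absolute value by the corresponding term of the second.
-/

open Real

lemma Real.abs_log_one_sub_mul_le {c x : ℝ} (hc : |c| ≤ 1) (hx₀ : 0 ≤ x) (hx₁ : x < 1) :
    |log (1 - c * x)| ≤ -log (1 - x) := by
  have hcx : |c * x| ≤ x := by
    rw [abs_mul, abs_of_nonneg hx₀]
    exact mul_le_of_le_one_left hx₀ hc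
  obtain ⟨hcx_lo, hcx_hi⟩ := abs_le.mp hcx
  have hpos : 0 < 1 - x := by linarith
  have h_upper : 1 - c * x ≤ (1 - x)⁻¹ := by
    rw [← one_div, le_div_iff₀ hpos]
    nlinarith [mul_nonneg hx₀ (by linarith : 0 ≤ 1 - x)]
  refine abs_le.mpr ⟨?_, ?_⟩
  · rw [neg_neg]
    exact log_le_log hpos (by linarith)
  · rw [← log_inv]
    exact log_le_log (by linarith) h_upper

lemma Real.abs_tsum_neg_log_one_sub_mul_le {ι : Type*} {c x : ι → ℝ} (hc : ∀ i, |c i| ≤ 1)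
    (hx₀ : ∀ i, 0 ≤ x i) (hx₁ : ∀ i, x i < 1) (hsum : Summable fun i ↦ -log (1 - x i)) :
    |∑' i, -log (1 - c i * x i)| ≤ ∑' i, -log (1 - x i) :=
  tsum_of_norm_bounded (f := fun i ↦ -log (1 - c i * x i)) hsum.hasSum fun i ↦ by
    rw [norm_neg, norm_eq_abs]
    exact abs_log_one_sub_mul_le (hc i) (hx₀ i) (hx₁ i)

lemma Nat.Primes.summable_neg_log_one_sub_rpow {σ : ℝ} (hσ : 1 < σ) :
    Summable fun p : Nat.Primes ↦ -Real.log (1 - (p : ℝ) ^ (-σ)) := by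
  have h := (Nat.Primes.summable_rpow.mpr (neg_lt_neg hσ)).neg
  simpa only [sub_eq_add_neg] using (Real.summable_log_one_add_of_summable h).neg

lemma Complex.neg_log_one_sub_mul_ofReal {c : ℂ} (hc_im : c.im = 0) (hc : ‖c‖ ≤ 1) {x : ℝ}
    (hx₀ : 0 ≤ x) (hx₁ : x ≤ 1) :
    -Complex.log (1 - c * x) = ((-Real.log (1 - c.re * x) : ℝ) : ℂ) := by
  have hc_re : |c.re| ≤ 1 := (abs_re_le_norm c).trans hc
  have hnonneg : 0 ≤ 1 - c.re * x := by
    nlinarith [mul_le_mul_of_nonneg_right (abs_le.mp hc_re).2 hx₀]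
  rw [ofReal_neg, ofReal_log hnonneg, ← re_add_im c, hc_im]
  push_cast
  simp

lemma DirichletCharacter.LSeries_eq_ofReal_exp {N : ℕ} (χ : DirichletCharacter ℂ N)
    (hχ : ∀ n : ℕ, (χ n).im = 0) {σ : ℝ} (hσ : 1 < σ) :
    LSeries (fun n ↦ χ n) σ =
      (Real.exp (∑' p : Nat.Primes, -log (1 - (χ p).re * (p : ℝ) ^ (-σ))) : ℂ) := by
  rw [← LSeries_eulerProduct_exp_log χ (by simpa using hσ), Complex.ofReal_exp,
    Complex.ofReal_tsum]
  congr 1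
  refine tsum_congr fun p ↦ ?_
  have hp : (1 : ℝ) ≤ p := by exact_mod_cast p.2.one_lt.le
  rw [← Complex.neg_log_one_sub_mul_ofReal (hχ p) (χ.norm_le_one _) (by positivity)
    (rpow_le_one_of_one_le_of_nonpos hp (by linarith)), Complex.ofReal_cpow (by positivity)]
  push_cast
  rfl

lemma riemannZeta_eq_ofReal_exp {σ : ℝ} (hσ : 1 < σ) :
    riemannZeta σ = (Real.exp (∑' p : Nat.Primes, -log (1 - (p : ℝ) ^ (-σ))) : ℂ) := by
  have h_one (n : ℕ) : (1 : DirichletCharacter ℂ 1) n = 1 :=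
    MulChar.one_apply (isUnit_of_subsingleton _)
  have h := (1 : DirichletCharacter ℂ 1).LSeries_eq_ofReal_exp (by simp [h_one]) hσ
  rw [DirichletCharacter.LSeries_modOne_eq, LSeries_one_eq_riemannZeta (by simpa using hσ)] at h
  simpa [h_one] using h

open Complex in
/-- For a real Dirichlet character χ and an integer s ≥ 2, the L-value L(s,χ) is real and
satisfies ζ(s)⁻¹ ≤ L(s,χ) ≤ ζ(s). -/
theorem real_dirichlet_L_between_zeta_inv_and_zeta
    (N : ℕ) (χ : DirichletCharacter ℂ N) (hχ : ∀ n : ℕ, (χ (n : ZMod N)).im = 0)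
    (s : ℕ) (hs : 2 ≤ s) :
    (LSeries (fun n : ℕ => χ (n : ZMod N)) (s : ℂ)).im = 0 ∧
    ((riemannZeta (s : ℂ)).re)⁻¹ ≤ (LSeries (fun n : ℕ => χ (n : ZMod N)) (s : ℂ)).re ∧
    (LSeries (fun n : ℕ => χ (n : ZMod N)) (s : ℂ)).re ≤ (riemannZeta (s : ℂ)).re := by
  have hσ : 1 < (s : ℝ) := by exact_mod_cast hs
  have hx₀ (p : Nat.Primes) : 0 ≤ (p : ℝ) ^ (-(s : ℝ)) := by positivity
  have hx₁ (p : Nat.Primes) : (p : ℝ) ^ (-(s : ℝ)) < 1 :=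
    rpow_lt_one_of_one_lt_of_neg (by exact_mod_cast p.2.one_lt) (by linarith)
  have hc (p : Nat.Primes) : |(χ p).re| ≤ 1 := (abs_re_le_norm _).trans (χ.norm_le_one _)
  obtain ⟨h_lower, h_upper⟩ := abs_le.mp <| Real.abs_tsum_neg_log_one_sub_mul_le hc hx₀ hx₁
    (Nat.Primes.summable_neg_log_one_sub_rpow hσ)
  rw [← ofReal_natCast, χ.LSeries_eq_ofReal_exp hχ hσ, riemannZeta_eq_ofReal_exp hσ]
  simp only [ofReal_re, ofReal_im, ← Real.exp_neg, Real.exp_le_exp]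
  exact ⟨trivial, by linarith, h_upper⟩
end

section
/- Suppose 4 divides N, c ∈ ℤ with gcd(c, N) = 1, α ∈ ℤ is odd, and t ≥ 1 is an integer. Then the exponential sum ∑_{x=0}^{2^t − 1} exp(2πi · α ((N/2) x² − c x) / 2^t) equals 0. -/
/-! Shifting `x` by `2^(t-1)` changes `α (N/2) x²` by an integer multiple of `2^t`, because `N/2`
is even, and changes `-α c x` by `2^(t-1)` times the odd number `α c`. So the summand is
antiperiodic with antiperiod `2^(t-1)`, and the two halves of the sum cancel. -/

open Complex

theorem Function.Antiperiodic.sum_range_two_mul_eq_zero {M : Type*} [AddCommGroup M]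
    {f : ℕ → M} {n : ℕ} (hf : Function.Antiperiodic f n) :
    ∑ x ∈ Finset.range (2 * n), f x = 0 := by
  rw [two_mul, Finset.sum_range_add]
  simp only [add_comm n, hf _, Finset.sum_neg_distrib, add_neg_cancel]

theorem exp_quadratic_phase_antiperiodic {a b : ℤ} (ha : Even a) (hb : Odd b) {m : ℕ}
    (hm : m ≠ 0) :
    Function.Antiperiodic
      (fun x : ℕ => exp (2 * Real.pi * I * (a * x ^ 2 + b * x) / (2 * m))) m := by
  intro x
  obtain ⟨a', rfl⟩ := ha
  obtain ⟨b', rfl⟩ := hb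
  have hshift : 2 * Real.pi * I * (↑(a' + a') * ↑(x + m) ^ 2 + ↑(2 * b' + 1) * ↑(x + m)) / (2 * m)
      = 2 * Real.pi * I * (↑(a' + a') * x ^ 2 + ↑(2 * b' + 1) * x) / (2 * m)
        + ((a' * (2 * x + m) + b' : ℤ) : ℂ) * (2 * Real.pi * I) + Real.pi * I := by
    push_cast
    field_simp
    ring
  dsimp only
  rw [hshift, exp_add_pi_mul_I, exp_periodic.int_mul _ _]

/-- For 4 ∣ N, gcd(c,N) = 1, α odd and t ≥ 1, the exponential sum
∑_{x mod 2^t} e(α((N/2) x² − c x)/2^t) vanishes. -/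
theorem exp_sum_vanishes_four_dvd (N c α : ℤ) (hN : (4 : ℤ) ∣ N)
    (hgcd : Int.gcd c N = 1) (hα : Odd α) (t : ℕ) (ht : 1 ≤ t) :
    ∑ x ∈ Finset.range (2 ^ t),
      Complex.exp (2 * Real.pi * Complex.I *
        ((α : ℂ) * (((N / 2 : ℤ) : ℂ) * (x : ℂ) ^ 2 - (c : ℂ) * (x : ℂ))) / ((2 : ℂ) ^ t)) = 0 := by
  obtain ⟨s, rfl⟩ : ∃ s, t = s + 1 := ⟨t - 1, by omega⟩
  have hc : Odd c := Int.isCoprime_two_right.mp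
    ((Int.isCoprime_iff_gcd_eq_one.mpr hgcd).of_isCoprime_of_dvd_right (dvd_trans ⟨2, rfl⟩ hN))
  have hN2 : Even (N / 2) := by
    obtain ⟨n, rfl⟩ := hN
    exact ⟨n, by omega⟩
  have hanti := exp_quadratic_phase_antiperiodic (hN2.mul_left α) (hα.mul hc).neg
    (pow_ne_zero s two_ne_zero)
  rw [pow_succ' 2 s]
  refine Eq.trans (Finset.sum_congr rfl fun x _ => ?_) hanti.sum_range_two_mul_eq_zero
  congr 1
  push_cast
  ring
end

section
/- Let n ≥ 6 be an even integer and let 0 ≤ r₁ ≤ r₂ ≤ ⋯ ≤ rₙ be integers such that (r₁,r₂,r₃,r₄) is one of: (0,0,0,i) with 0 ≤ i ≤ 2; (0,0,1,i) with 1 ≤ i ≤ 3; (0,1,1,i) with 1 ≤ i ≤ 2; or (0,1,2,i) with 2 ≤ i ≤ 3. Then ∑_{t ≥ rₙ+2, l(t−1) odd} 2^{d(t)−3/2} + ∑_{t ≥ rₙ+2, l(t−1) even} 2^{d(t)−1} ≤ 2^{r₄ − rₙ − 1}. Furthermore, when (r₁,r₂,r₃,r₄) = (0,0,0,2) or (0,0,1,3),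 the left-hand side is at most 2^{r₄ − rₙ − 2}. -/
/-! For `t ≥ rₙ + 2` every `rᵢ` lies below `t - 1`, so `d` is affine there with slope `1 - n/2`,
and whatever the parity of `l(t - 1)` the term at `t` is at most `2^(d(t) - 1)`. The tail is thus
dominated by a geometric series of ratio `2^(1 - n/2) ≤ 1/4`. Bounding `∑ rᵢ` by
`r₁ + r₂ + r₃ + r₄ + (n - 4) rₙ` and using `r₁ + r₂ + r₃ ≤ r₄ + 1` (resp. `≤ r₄ - 2` in the two
sharper cases) reduces both claims to `2^(-1/2) · 4/3 ≤ 1`. -/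

/-- `l(t) = #{i : r i < t and r i − t is odd}`. -/
noncomputable def lfun (n : ℕ) (r : Fin n → ℤ) (t : ℤ) : ℕ :=
  {i : Fin n | r i < t ∧ Odd (r i - t)}.ncard

/-- `d(t) = t + (1/2) ∑_{i : r i < t − 1} (r i − t + 1)`. -/
noncomputable def dfun (n : ℕ) (r : Fin n → ℤ) (t : ℤ) : ℝ :=
  (t : ℝ) + (1 / 2) * ∑ i : Fin n, if r i < t - 1 then ((r i : ℝ) - (t : ℝ) + 1) else 0

/-- The tail sum `∑_{t ≥ t₀, l(t−1) odd} 2^{d(t)−3/2} + ∑_{t ≥ t₀, l(t−1) even} 2^{d(t)−1}`,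
with the variable `t = t₀ + j` running over `j ∈ ℕ`. -/
noncomputable def tailSum (n : ℕ) (r : Fin n → ℤ) (t₀ : ℤ) : ℝ :=
  (∑' j : ℕ, if Odd (lfun n r (t₀ + (j : ℤ) - 1)) then
      (2 : ℝ) ^ (dfun n r (t₀ + (j : ℤ)) - 3 / 2) else 0) +
  (∑' j : ℕ, if Even (lfun n r (t₀ + (j : ℤ) - 1)) then
      (2 : ℝ) ^ (dfun n r (t₀ + (j : ℤ)) - 1) else 0)

theorem Finset.sum_le_sum_add_card_compl_nsmul {ι M : Type*} [Fintype ι] [DecidableEq ι]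
    [AddCommMonoid M] [PartialOrder M] [IsOrderedAddMonoid M] (s : Finset ι) (f : ι → M)
    (R : M) (h : ∀ i ∉ s, f i ≤ R) :
    ∑ i, f i ≤ ∑ i ∈ s, f i + (Fintype.card ι - s.card) • R := by
  rw [← s.sum_add_sum_compl f, ← Finset.card_compl]
  gcongr
  exact Finset.sum_le_card_nsmul _ _ _ fun i hi => h i (Finset.mem_compl.1 hi)

theorem Fin.sum_le_sum_four_add_mul {n : ℕ} (hn : 4 ≤ n) (f : Fin n → ℝ) (R : ℝ)
    (h : ∀ i, f i ≤ R) :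
    ∑ i, f i ≤ f ⟨0, by omega⟩ + f ⟨1, by omega⟩ + f ⟨2, by omega⟩ + f ⟨3, by omega⟩
      + (n - 4) * R := by
  have hsum := Finset.sum_le_sum_add_card_compl_nsmul (Finset.univ.map (Fin.castLEEmb hn)) f R
    fun i _ => h i
  rwa [Finset.sum_map, Fin.sum_univ_four, Finset.card_map, Finset.card_univ, Fintype.card_fin,
    Fintype.card_fin, nsmul_eq_mul, Nat.cast_sub hn] at hsum

theorem two_rpow_neg_half_le : (2 : ℝ) ^ (-(1 / 2) : ℝ) ≤ 3 / 4 := by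
  rw [Real.rpow_neg zero_le_two, ← Real.sqrt_eq_rpow, inv_le_comm₀ (by positivity) (by norm_num),
    Real.le_sqrt (by norm_num) (by norm_num)]
  norm_num

theorem two_rpow_mul_inv_one_sub_two_rpow_le {m D B : ℝ} (hm : 6 ≤ m)
    (hD : D ≤ B + 5 / 2 - m / 2) : (2 : ℝ) ^ D * (1 - (2 : ℝ) ^ (1 - m / 2))⁻¹ ≤ 2 ^ B := by
  have hq : (2 : ℝ) ^ (1 - m / 2) ≤ 1 / 4 := calc
    _ ≤ (2 : ℝ) ^ (-2 : ℝ) := Real.rpow_le_rpow_of_exponent_le one_le_two (by linarith)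
    _ = 1 / 4 := by norm_num
  rw [mul_inv_le_iff₀ (by linarith)]
  calc (2 : ℝ) ^ D ≤ 2 ^ (B + -(1 / 2)) := Real.rpow_le_rpow_of_exponent_le one_le_two (by linarith)
    _ = 2 ^ B * 2 ^ (-(1 / 2) : ℝ) := Real.rpow_add two_pos _ _
    _ ≤ 2 ^ B * (3 / 4) := by gcongr; exact two_rpow_neg_half_le
    _ ≤ 2 ^ B * (1 - 2 ^ (1 - m / 2)) := by gcongr; linarith

theorem tsum_ite_add_tsum_ite_le {ι : Type*} {p q : ι → Prop} [DecidablePred p]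
    [DecidablePred q] (hpq : ∀ j, ¬(p j ∧ q j)) {f g b : ι → ℝ} (hf : ∀ j, 0 ≤ f j)
    (hg : ∀ j, 0 ≤ g j) (hfb : ∀ j, f j ≤ b j) (hgb : ∀ j, g j ≤ b j) (hb : Summable b) :
    ∑' j, (if p j then f j else 0) + ∑' j, (if q j then g j else 0) ≤ ∑' j, b j := by
  have hf' : ∀ j, 0 ≤ if p j then f j else 0 := fun j => by split_ifs <;> simp [hf]
  have hg' : ∀ j, 0 ≤ if q j then g j else 0 := fun j => by split_ifs <;> simp [hg]
  have hle : ∀ j, ((if p j then f j else 0) + if q j then g j else 0) ≤ b j := fun j => by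
    by_cases hp : p j <;> by_cases hq : q j
    · exact absurd ⟨hp, hq⟩ (hpq j)
    all_goals simp [hp, hq, hfb, hgb, (hf j).trans (hfb j)]
  have hsf := hb.of_nonneg_of_le hf' fun j => (le_add_of_nonneg_right (hg' j)).trans (hle j)
  have hsg := hb.of_nonneg_of_le hg' fun j => (le_add_of_nonneg_left (hf' j)).trans (hle j)
  rw [← hsf.tsum_add hsg]
  exact (hsf.add hsg).tsum_le_tsum hle hb

section Tail

variable {n : ℕ} {r : Fin n → ℤ} {t : ℤ}

theorem dfun_eq_of_forall_lt (h : ∀ i, r i < t - 1) :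
    dfun n r t = t + (∑ i, (r i : ℝ) - n * t + n) / 2 := by
  simp only [dfun, if_pos (h _), Finset.sum_add_distrib, Finset.sum_sub_distrib,
    Finset.sum_const, Finset.card_univ, Fintype.card_fin, nsmul_eq_mul]
  ring

theorem dfun_add_natCast (h : ∀ i, r i < t - 1) (j : ℕ) :
    dfun n r (t + j) = dfun n r t + j * (1 - n / 2) := by
  rw [dfun_eq_of_forall_lt h, dfun_eq_of_forall_lt fun i => (h i).trans_le (by omega)]
  push_cast
  ring

theorem two_rpow_dfun_add_natCast (h : ∀ i, r i < t - 1) (c : ℝ) (j : ℕ) :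
    (2 : ℝ) ^ (dfun n r (t + j) - c) = 2 ^ (dfun n r t - c) * (2 ^ (1 - n / 2 : ℝ)) ^ j := by
  rw [dfun_add_natCast h, add_sub_right_comm, Real.rpow_add two_pos, mul_comm (j : ℝ),
    Real.rpow_mul_natCast zero_le_two]

theorem tailSum_le_geometric (hn : 2 < n) (h : ∀ i, r i < t - 1) :
    tailSum n r t ≤ 2 ^ (dfun n r t - 1) * (1 - (2 : ℝ) ^ (1 - n / 2 : ℝ))⁻¹ := by
  have hq1 : (2 : ℝ) ^ (1 - n / 2 : ℝ) < 1 := Real.rpow_lt_one_of_one_lt_of_neg one_lt_two (by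
    have : (2 : ℝ) < n := by exact_mod_cast hn
    linarith)
  have hq0 : (0 : ℝ) ≤ 2 ^ (1 - n / 2 : ℝ) := by positivity
  calc tailSum n r t ≤ ∑' j : ℕ, 2 ^ (dfun n r t - 1) * ((2 : ℝ) ^ (1 - n / 2 : ℝ)) ^ j :=
        tsum_ite_add_tsum_ite_le (fun _ hj => Nat.not_even_iff_odd.2 hj.1 hj.2)
          (fun _ => by positivity) (fun _ => by positivity)
          (fun j => by rw [two_rpow_dfun_add_natCast h]; gcongr <;> norm_num)
          (fun j => (two_rpow_dfun_add_natCast h 1 j).le)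
          ((summable_geometric_of_lt_one hq0 hq1).mul_left _)
    _ = _ := by rw [tsum_mul_left, tsum_geometric_of_lt_one hq0 hq1]

theorem tailSum_le_two_rpow_of_sum_le (hn : 6 ≤ n) {R : ℤ} (hR : ∀ i, r i ≤ R) {B : ℝ}
    (hS : ∑ i, (r i : ℝ) ≤ 2 * B + (n - 2) * R + 3) : tailSum n r (R + 2) ≤ 2 ^ B := by
  have hlt : ∀ i, r i < R + 2 - 1 := fun i => by linarith [hR i]
  have hn' : (6 : ℝ) ≤ n := by exact_mod_cast hn
  refine (tailSum_le_geometric (by omega) hlt).trans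
    (two_rpow_mul_inv_one_sub_two_rpow_le hn' ?_)
  rw [dfun_eq_of_forall_lt hlt]
  push_cast
  linarith

end Tail

/-- Lemma 3.9 (Lemma `lemma4` of the paper): bound on the tail of the local density sum
at p = 2 for the admissible quadruples (r₁,r₂,r₃,r₄). -/
theorem tail_sum_bound (n : ℕ) (hn : 6 ≤ n) (r : Fin n → ℤ)
    (hmono : Monotone r)
    (hcases :
      (r ⟨0, by omega⟩ = 0 ∧ r ⟨1, by omega⟩ = 0 ∧ r ⟨2, by omega⟩ = 0 ∧
        0 ≤ r ⟨3, by omega⟩ ∧ r ⟨3, by omega⟩ ≤ 2) ∨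
      (r ⟨0, by omega⟩ = 0 ∧ r ⟨1, by omega⟩ = 0 ∧ r ⟨2, by omega⟩ = 1 ∧
        1 ≤ r ⟨3, by omega⟩ ∧ r ⟨3, by omega⟩ ≤ 3) ∨
      (r ⟨0, by omega⟩ = 0 ∧ r ⟨1, by omega⟩ = 1 ∧ r ⟨2, by omega⟩ = 1 ∧
        1 ≤ r ⟨3, by omega⟩ ∧ r ⟨3, by omega⟩ ≤ 2) ∨
      (r ⟨0, by omega⟩ = 0 ∧ r ⟨1, by omega⟩ = 1 ∧ r ⟨2, by omega⟩ = 2 ∧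
        2 ≤ r ⟨3, by omega⟩ ∧ r ⟨3, by omega⟩ ≤ 3)) :
    tailSum n r (r ⟨n - 1, by omega⟩ + 2) ≤
      (2 : ℝ) ^ ((r ⟨3, by omega⟩ : ℝ) - (r ⟨n - 1, by omega⟩ : ℝ) - 1) ∧
    ((r ⟨0, by omega⟩ = 0 ∧ r ⟨1, by omega⟩ = 0 ∧ r ⟨2, by omega⟩ = 0 ∧ r ⟨3, by omega⟩ = 2) ∨
     (r ⟨0, by omega⟩ = 0 ∧ r ⟨1, by omega⟩ = 0 ∧ r ⟨2, by omega⟩ = 1 ∧ r ⟨3, by omega⟩ = 3) →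
      tailSum n r (r ⟨n - 1, by omega⟩ + 2) ≤
        (2 : ℝ) ^ ((r ⟨3, by omega⟩ : ℝ) - (r ⟨n - 1, by omega⟩ : ℝ) - 2)) := by
  have hR : ∀ i, r i ≤ r ⟨n - 1, by omega⟩ := fun i => hmono (Nat.le_sub_one_of_lt i.isLt)
  have hS := Fin.sum_le_sum_four_add_mul (by omega) (fun i => (r i : ℝ)) _
    fun i => Int.cast_le.2 (hR i)
  have hbound : ∀ k : ℕ,
      r ⟨0, by omega⟩ + r ⟨1, by omega⟩ + r ⟨2, by omega⟩ + 2 * k ≤ r ⟨3, by omega⟩ + 3 →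
      tailSum n r (r ⟨n - 1, by omega⟩ + 2) ≤
        2 ^ ((r ⟨3, by omega⟩ : ℝ) - r ⟨n - 1, by omega⟩ - k) := by
    intro k hk
    have hk' : (r ⟨0, by omega⟩ + r ⟨1, by omega⟩ + r ⟨2, by omega⟩ + 2 * k : ℝ) ≤
        r ⟨3, by omega⟩ + 3 := by exact_mod_cast hk
    exact tailSum_le_two_rpow_of_sum_le hn hR (by linarith)
  constructor
  · exact_mod_cast hbound 1 (by rcases hcases with h | h | h | h <;> omega)
  · intro hsharp
    exact_mod_cast hbound 2 (by rcases hsharp with h | h <;> omega)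
end
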